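/- arXiv:2212.09728 — 3 statements merged into one kernel-verified Lean document; each statement's English description precedes it below -/
import Mathlib

section
/- Let σ > 0, θ ∈ [0,1], and α, β ∈ ℝ. Then e^{σ|α|} e^{σ|β|} − e^{σ|α+β|} ≤ (2σ · min{|α|, |β|})^θ · e^{σ|α|} e^{σ|β|}. -/
lemma min_one_le_rpow_aux (x θ : ℝ) (hx : 0 ≤ x) (hθ0 : 0 ≤ θ) (hθ1 : θ ≤ 1) :
    min 1 x ≤ x ^ θ := by
  rcases le_or_gt 1 x with h | h
  · have hxpos : 0 < x := lt_of_lt_of_le one_pos h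
    have : (1 : ℝ) ≤ x ^ θ := by
      calc (1 : ℝ) = x ^ (0 : ℝ) := (Real.rpow_zero x).symm
      _ ≤ x ^ θ := Real.rpow_le_rpow_of_exponent_le h hθ0
    calc min 1 x ≤ 1 := min_le_left _ _
    _ ≤ x ^ θ := this
  · rcases eq_or_lt_of_le hx with h0 | h0
    · have : min 1 x = x := min_eq_right (by linarith)
      rw [this, ← h0]
      exact Real.rpow_nonneg le_rfl θ
    · have : min 1 x = x := min_eq_right h.le
      rw [this]
      calc x = x ^ (1 : ℝ) := (Real.rpow_one x).symm
      _ ≤ x ^ θ := Real.rpow_le_rpow_of_exponent_ge h0 h.le hθ1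

/-- First inequality of Lemma 3.5: for σ > 0, θ ∈ [0,1], α, β ∈ ℝ,
    e^{σ|α|} e^{σ|β|} − e^{σ|α+β|} ≤ (2σ min{|α|,|β|})^θ e^{σ|α|} e^{σ|β|}. -/
theorem exp_diff_le_min_pow_mul_exp (σ θ α β : ℝ) (hσ : 0 < σ)
    (hθ0 : 0 ≤ θ) (hθ1 : θ ≤ 1) :
    Real.exp (σ * |α|) * Real.exp (σ * |β|) - Real.exp (σ * |α + β|)
      ≤ (2 * σ * min (|α|) (|β|)) ^ θ *
          (Real.exp (σ * |α|) * Real.exp (σ * |β|)) := by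
  set m := min (|α|) (|β|) with hm
  have hm0 : 0 ≤ m := le_min (abs_nonneg _) (abs_nonneg _)
  set E : ℝ := Real.exp (σ * |α|) * Real.exp (σ * |β|) with hE
  have hEexp : E = Real.exp (σ * |α| + σ * |β|) := (Real.exp_add _ _).symm
  have hEpos : 0 < E := by rw [hEexp]; exact Real.exp_pos _
  -- |α| + |β| - 2m ≤ |α + β|
  have hkey : |α| + |β| - 2 * m ≤ |α + β| := by
    have h1 : |(|α| - |β|)| ≤ |α + β| := by
      have := abs_abs_sub_abs_le_abs_sub α (-β)
      simpa using this
    rcases min_cases (|α|) (|β|) with ⟨he, hle⟩ | ⟨he, hle⟩ <;>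
      rw [hm, he] <;> cases' abs_cases (|α| - |β|) with hc hc <;> linarith [h1, hc.1]
  -- exp lower bound
  have hexp_lb : E * (1 - 2 * σ * m) ≤ Real.exp (σ * |α + β|) := by
    have h1 : σ * (|α| + |β| - 2 * m) ≤ σ * |α + β| :=
      mul_le_mul_of_nonneg_left hkey hσ.le
    have h2 : E * Real.exp (-(2 * σ * m)) = Real.exp (σ * (|α| + |β| - 2 * m)) := by
      rw [hEexp, ← Real.exp_add]; ring_nf
    have h3 : 1 - 2 * σ * m ≤ Real.exp (-(2 * σ * m)) := by
      have := Real.add_one_le_exp (-(2 * σ * m)); linarith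
    calc E * (1 - 2 * σ * m) ≤ E * Real.exp (-(2 * σ * m)) :=
          mul_le_mul_of_nonneg_left h3 hEpos.le
      _ = Real.exp (σ * (|α| + |β| - 2 * m)) := h2
      _ ≤ Real.exp (σ * |α + β|) := Real.exp_le_exp.mpr h1
  have hmin : E - Real.exp (σ * |α + β|) ≤ min 1 (2 * σ * m) * E := by
    rcases le_total 1 (2 * σ * m) with h | h
    · rw [min_eq_left h]
      have := (Real.exp_pos (σ * |α + β|)).le
      linarith
    · rw [min_eq_right h]
      nlinarith [hexp_lb]
  have hx0 : 0 ≤ 2 * σ * m := by positivity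
  calc E - Real.exp (σ * |α + β|) ≤ min 1 (2 * σ * m) * E := hmin
    _ ≤ (2 * σ * m) ^ θ * E :=
        mul_le_mul_of_nonneg_right (min_one_le_rpow_aux _ θ hx0 hθ0 hθ1) hEpos.le
end

section
/- Let 0 < l < 1, let φ(ξ) = l·ξ·|ξ| − ξ³ be the phase function of the generalized Benjamin equation, and let ρ > 1/4. Then there exists a constant C > 0 such that for every τ ∈ ℝ, ∫_ℝ ξ² / (1 + |τ − φ(ξ)|)^{4ρ} dξ ≤ C. -/
/-!
Split the line at `|ξ| = 1`. On `[-1, 1]` the integrand is at most `1`. For `ξ ≥ 1` the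
phase `φ(ξ) = l ξ² - ξ³` is strictly decreasing with `|φ'(ξ)| = 3ξ² - 2lξ ≥ ξ²` (as `l ≤ 1`),
so the substitution `η = φ(ξ)` bounds the tail by
`∫ (1 + |τ - η|)^{-4ρ} dη = ∫ (1 + |η|)^{-4ρ} dη`, which is finite because `4ρ > 1` and does
not depend on `τ`. Since `φ` is odd, the half-line `ξ ≤ 0` is the half-line `ξ ≥ 0` for `-τ`.
-/

open MeasureTheory ENNReal Set

noncomputable def benjaminPhase (l : ℝ) (ξ : ℝ) : ℝ := l * ξ * |ξ| - ξ ^ 3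

theorem setLIntegral_mul_comp_le_lintegral_of_le_abs_deriv {s : Set ℝ} {f f' w : ℝ → ℝ}
    (hs : MeasurableSet s) (hf' : ∀ x ∈ s, HasDerivWithinAt f (f' x) s x) (hf : InjOn f s)
    (hw : ∀ x ∈ s, w x ≤ |f' x|) (g : ℝ → ℝ≥0∞) :
    ∫⁻ x in s, ENNReal.ofReal (w x) * g (f x) ≤ ∫⁻ y, g y :=
  calc ∫⁻ x in s, ENNReal.ofReal (w x) * g (f x)
      ≤ ∫⁻ x in s, ENNReal.ofReal |f' x| * g (f x) :=
        setLIntegral_mono' hs fun x hx => by gcongr; exact hw x hx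
    _ = ∫⁻ y in f '' s, g y := (lintegral_image_eq_lintegral_abs_deriv_mul hs hf' hf g).symm
    _ ≤ ∫⁻ y, g y := setLIntegral_le_lintegral _ _

theorem lintegral_inv_one_add_abs_sub_rpow_eq (r τ : ℝ) :
    ∫⁻ x : ℝ, ENNReal.ofReal ((1 + |τ - x|) ^ r)⁻¹
      = ∫⁻ x : ℝ, ENNReal.ofReal ((1 + ‖x‖) ^ (-r)) := by
  simp_rw [Real.norm_eq_abs, Real.rpow_neg (by positivity : (0:ℝ) ≤ 1 + |_|)]
  exact lintegral_sub_left_eq_self (fun x => ENNReal.ofReal ((1 + |x|) ^ r)⁻¹) τ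

theorem benjaminPhase_neg (l ξ : ℝ) : benjaminPhase l (-ξ) = -benjaminPhase l ξ := by
  simp only [benjaminPhase, abs_neg]; ring

theorem continuous_benjaminPhase (l : ℝ) : Continuous (benjaminPhase l) := by
  unfold benjaminPhase; fun_prop

theorem hasDerivAt_benjaminPhase_of_pos (l : ℝ) {ξ : ℝ} (hξ : 0 < ξ) :
    HasDerivAt (benjaminPhase l) (2 * l * ξ - 3 * ξ ^ 2) ξ := by
  have h : HasDerivAt (fun x => l * x ^ 2 - x ^ 3) (2 * l * ξ - 3 * ξ ^ 2) ξ := by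
    refine (((hasDerivAt_pow 2 ξ).const_mul l).sub (hasDerivAt_pow 3 ξ)).congr_deriv ?_
    push_cast; ring
  refine h.congr_of_eventuallyEq ?_
  filter_upwards [eventually_gt_nhds hξ] with x hx
  simp only [benjaminPhase, abs_of_pos hx]; ring

theorem sq_le_neg_deriv_benjaminPhase {l ξ : ℝ} (hl : l ≤ ξ) (hξ : 0 < ξ) :
    ξ ^ 2 ≤ -(2 * l * ξ - 3 * ξ ^ 2) := by
  nlinarith

theorem strictAntiOn_benjaminPhase {l : ℝ} (hl : l ≤ 1) :
    StrictAntiOn (benjaminPhase l) (Ici 1) :=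
  strictAntiOn_of_hasDerivWithinAt_neg (convex_Ici 1) (continuous_benjaminPhase l).continuousOn
    (fun x hx => by
      rw [interior_Ici] at hx ⊢
      exact (hasDerivAt_benjaminPhase_of_pos l (zero_lt_one.trans hx)).hasDerivWithinAt)
    (fun x hx => by
      rw [interior_Ici] at hx
      have := sq_le_neg_deriv_benjaminPhase (hl.trans hx.out.le) (zero_lt_one.trans hx)
      linarith [pow_pos (zero_lt_one.trans hx.out) 2])

theorem setLIntegral_Ioi_benjamin_le {l : ℝ} (hl : l ≤ 1) (r τ : ℝ) :
    ∫⁻ ξ in Ioi 1, ENNReal.ofReal (ξ ^ 2 / (1 + |τ - benjaminPhase l ξ|) ^ r)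
      ≤ ∫⁻ x : ℝ, ENNReal.ofReal ((1 + ‖x‖) ^ (-r)) := by
  rw [← lintegral_inv_one_add_abs_sub_rpow_eq r τ]
  simp_rw [div_eq_mul_inv, ENNReal.ofReal_mul (sq_nonneg _)]
  refine setLIntegral_mul_comp_le_lintegral_of_le_abs_deriv measurableSet_Ioi
    (fun ξ hξ => (hasDerivAt_benjaminPhase_of_pos l (zero_lt_one.trans hξ)).hasDerivWithinAt)
    ((strictAntiOn_benjaminPhase hl).injOn.mono Ioi_subset_Ici_self)
    (fun ξ hξ => ?_) (fun x => ENNReal.ofReal ((1 + |τ - x|) ^ r)⁻¹)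
  exact (sq_le_neg_deriv_benjaminPhase (hl.trans hξ.out.le) (zero_lt_one.trans hξ)).trans
    (neg_le_abs _)

theorem setLIntegral_Icc_benjamin_le_one (l : ℝ) {r : ℝ} (hr : 0 ≤ r) (τ : ℝ) :
    ∫⁻ ξ in Icc 0 1, ENNReal.ofReal (ξ ^ 2 / (1 + |τ - benjaminPhase l ξ|) ^ r) ≤ 1 := by
  calc ∫⁻ ξ in Icc 0 1, ENNReal.ofReal (ξ ^ 2 / (1 + |τ - benjaminPhase l ξ|) ^ r)
      ≤ ∫⁻ _ in Icc (0:ℝ) 1, 1 := by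
        refine setLIntegral_mono' measurableSet_Icc fun ξ hξ => ENNReal.ofReal_le_one.2 ?_
        refine div_le_one_of_le₀ ?_ (by positivity)
        calc ξ ^ 2 ≤ 1 := pow_le_one₀ hξ.1 hξ.2
          _ ≤ _ := Real.one_le_rpow (le_add_of_nonneg_right (abs_nonneg _)) hr
    _ = 1 := by simp

theorem setLIntegral_Ici_benjamin_le {l : ℝ} (hl : l ≤ 1) {r : ℝ} (hr : 0 ≤ r) (τ : ℝ) :
    ∫⁻ ξ in Ici 0, ENNReal.ofReal (ξ ^ 2 / (1 + |τ - benjaminPhase l ξ|) ^ r)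
      ≤ 1 + ∫⁻ x : ℝ, ENNReal.ofReal ((1 + ‖x‖) ^ (-r)) := by
  rw [← Icc_union_Ioi_eq_Ici zero_le_one]
  exact (lintegral_union_le _ _ _).trans
    (add_le_add (setLIntegral_Icc_benjamin_le_one l hr τ) (setLIntegral_Ioi_benjamin_le hl r τ))

theorem setLIntegral_Iic_benjamin_eq (l r τ : ℝ) :
    ∫⁻ ξ in Iic 0, ENNReal.ofReal (ξ ^ 2 / (1 + |τ - benjaminPhase l ξ|) ^ r)
      = ∫⁻ ξ in Ici 0, ENNReal.ofReal (ξ ^ 2 / (1 + |-τ - benjaminPhase l ξ|) ^ r) := by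
  have hsymm : ∀ ξ, τ - benjaminPhase l ξ = -(-τ - benjaminPhase l (-ξ)) := fun ξ => by
    rw [benjaminPhase_neg]; ring
  calc ∫⁻ ξ in Iic 0, ENNReal.ofReal (ξ ^ 2 / (1 + |τ - benjaminPhase l ξ|) ^ r)
      = ∫⁻ ξ in Neg.neg ⁻¹' Ici 0,
          ENNReal.ofReal ((-ξ) ^ 2 / (1 + |-τ - benjaminPhase l (-ξ)|) ^ r) := by
        simp_rw [Set.neg_preimage, Set.neg_Ici, neg_zero, hsymm, abs_neg, neg_sq]
    _ = _ := (Measure.measurePreserving_neg volume).setLIntegral_comp_preimage_emb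
        (Homeomorph.neg ℝ).measurableEmbedding
          (fun ξ => ENNReal.ofReal (ξ ^ 2 / (1 + |-τ - benjaminPhase l ξ|) ^ r)) (Ici 0)

theorem lintegral_benjamin_le {l : ℝ} (hl : l ≤ 1) {r : ℝ} (hr : 0 ≤ r) (τ : ℝ) :
    ∫⁻ ξ, ENNReal.ofReal (ξ ^ 2 / (1 + |τ - benjaminPhase l ξ|) ^ r)
      ≤ 2 * (1 + ∫⁻ x : ℝ, ENNReal.ofReal ((1 + ‖x‖) ^ (-r))) := by
  rw [← setLIntegral_univ, ← Iic_union_Ici (a := (0 : ℝ)), two_mul]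
  refine (lintegral_union_le _ _ _).trans (add_le_add ?_ (setLIntegral_Ici_benjamin_le hl hr τ))
  rw [setLIntegral_Iic_benjamin_eq]
  exact setLIntegral_Ici_benjamin_le hl hr (-τ)

theorem integral_sq_div_weight_bounded_general (l ρ : ℝ) (hl1 : l < 1)
    (hρ : 1 / 4 < ρ) :
    ∃ C : ℝ, 0 < C ∧ ∀ τ : ℝ,
      (∫⁻ ξ : ℝ, ENNReal.ofReal
          (ξ ^ 2 / (1 + |τ - benjaminPhase l ξ|) ^ (4 * ρ)))
        ≤ ENNReal.ofReal C := by
  set J := ∫⁻ x : ℝ, ENNReal.ofReal ((1 + ‖x‖) ^ (-(4 * ρ)))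
  have hJ : J < ∞ :=
    finite_integral_one_add_norm (by simp only [Module.finrank_self]; push_cast; linarith)
  refine ⟨2 * (1 + J.toReal), by positivity, fun τ => ?_⟩
  rw [ENNReal.ofReal_mul zero_le_two, ENNReal.ofReal_add zero_le_one ENNReal.toReal_nonneg,
    ENNReal.ofReal_toReal hJ.ne, ENNReal.ofReal_one, ENNReal.ofReal_ofNat]
  exact lintegral_benjamin_le hl1.le (by linarith) τ

/-- Key step of Lemma 4.1: for 0 < l < 1 and ρ > 1/4 there is a constant C such that
    for every τ, ∫ ξ² / (1 + |τ − φ(ξ)|)^{4ρ} dξ ≤ C. -/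
theorem integral_sq_div_weight_bounded (l ρ : ℝ) (hl0 : 0 < l) (hl1 : l < 1)
    (hρ : 1 / 4 < ρ) :
    ∃ C : ℝ, 0 < C ∧ ∀ τ : ℝ,
      (∫⁻ ξ : ℝ, ENNReal.ofReal
          (ξ ^ 2 / (1 + |τ - benjaminPhase l ξ|) ^ (4 * ρ)))
        ≤ ENNReal.ofReal C :=
  integral_sq_div_weight_bounded_general l ρ hl1 hρ
end

section
/- Let 0 < l < 1, φ(ξ) = l·ξ·|ξ| − ξ³, ρ > 1/2 and s > 3ρ. Then there exists a constant c > 0 such that for every continuous compactly supported f : ℝ² → ℂ, the function F(x,t) := ∬_{ℝ²} e^{i(xξ + tτ)} (1+|ξ|)^{−s} (1+|τ−φ(ξ)|)^{−ρ} f(ξ,τ) dξ dτ satisfies ( ∫_ℝ ( sup_{t ∈ ℝ} |F(x,t)| )² dx )^{1/2} ≤ c ( ∬_{ℝ²} |f(ξ,τ)|² dξ dτ )^{1/2}. -/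
/-!
Fix `x` and write `g = (1+|ξ|)^{-s} (1+|τ-φ(ξ)|)^{-ρ} f` and `G(x,τ) = ∫ e^{ixξ} g(ξ,τ) dξ`.
Then `sup_t |F(x,t)| ≤ ∫ |G(x,τ)| dτ`, and Cauchy–Schwarz against the weight `(1+|τ|)^ρ` bounds
its square by `(∫ (1+|τ|)^{-2ρ} dτ) ∫ (1+|τ|)^{2ρ} |G(x,τ)|² dτ`, with a finite first factor
because `2ρ > 1`. Integrating in `x` and using Plancherel in `ξ` for each `τ` leaves
`2π ∫∫ (1+|τ|)^{2ρ} |g|²`. Finally `|φ(ξ)| ≤ (1+|ξ|)³ - 1` gives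
`1+|τ| ≤ (1+|τ-φ(ξ)|)(1+|ξ|)³`, so `(1+|τ|)^ρ |g| ≤ |f|` as soon as `s ≥ 3ρ`.
-/

open MeasureTheory ENNReal

/-- A^s F_ρ written as an absolutely convergent Fourier integral:
    (A^s F_ρ)(x,t) = ∬ e^{i(xξ+tτ)} (1+|ξ|)^s (1+|τ−φ(ξ)|)^{−ρ} f(ξ,τ) dξ dτ. -/
noncomputable def symbolFourierInt (l ρ s : ℝ) (f : ℝ × ℝ → ℂ) (x t : ℝ) : ℂ :=
  ∫ p : ℝ × ℝ, Complex.exp (Complex.I * ((x * p.1 + t * p.2 : ℝ) : ℂ)) *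
    (((1 + |p.1|) ^ s : ℝ) : ℂ) *
    (((1 + |p.2 - benjaminPhase l p.1|) ^ (-ρ) : ℝ) : ℂ) * f p

open Complex FourierTransform SchwartzMap

theorem HasCompactSupport.comp_prodMk_const {X Y M : Type*} [TopologicalSpace X]
    [T2Space X] [TopologicalSpace Y] [Zero M] {g : X × Y → M} (hg : HasCompactSupport g) (y : Y) :
    HasCompactSupport fun x => g (x, y) :=
  .intro (hg.image continuous_fst) fun x hx => by
    by_contra hne
    exact hx ⟨(x, y), subset_tsupport g hne, rfl⟩

theorem lintegral_enorm_sq_eq_eLpNorm_sq {α E : Type*} [MeasurableSpace α] {μ : Measure α}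
    [NormedAddCommGroup E] (u : α → E) : ∫⁻ x, ‖u x‖ₑ ^ 2 ∂μ = eLpNorm u 2 μ ^ 2 := by
  have := eLpNorm_nnreal_pow_eq_lintegral (f := u) (μ := μ) (p := 2) two_ne_zero
  simp only [NNReal.coe_ofNat, ENNReal.coe_ofNat, ENNReal.rpow_two] at this
  exact this.symm

theorem ENNReal.lintegral_sq_le_lintegral_inv_sq_mul {α : Type*} [MeasurableSpace α]
    {μ : Measure α} {w u : α → ℝ≥0∞} (hw : AEMeasurable w μ) (hu : AEMeasurable u μ)
    (hw0 : ∀ a, w a ≠ 0) (hwt : ∀ a, w a ≠ ∞) :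
    (∫⁻ a, u a ∂μ) ^ 2 ≤ (∫⁻ a, (w a)⁻¹ ^ 2 ∂μ) * ∫⁻ a, (w a * u a) ^ 2 ∂μ := by
  have hsplit : ∀ a, u a = (w a)⁻¹ * (w a * u a) := fun a => by
    rw [← mul_assoc, ENNReal.inv_mul_cancel (hw0 a) (hwt a), one_mul]
  have hholder := ENNReal.lintegral_mul_le_Lp_mul_Lq μ Real.HolderConjugate.two_two
    hw.inv (hw.mul hu)
  simp only [Pi.mul_apply, Pi.inv_apply, ← hsplit, ENNReal.rpow_two] at hholder
  calc (∫⁻ a, u a ∂μ) ^ 2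
      ≤ ((∫⁻ a, (w a)⁻¹ ^ 2 ∂μ) ^ (1 / 2 : ℝ) * (∫⁻ a, (w a * u a) ^ 2 ∂μ) ^ (1 / 2 : ℝ)) ^ 2 :=
        pow_le_pow_left' hholder 2
    _ = _ := by
      rw [mul_pow, ← ENNReal.rpow_natCast, ← ENNReal.rpow_natCast, ← ENNReal.rpow_mul,
        ← ENNReal.rpow_mul]
      norm_num

section Plancherel

variable {V F : Type*} [NormedAddCommGroup V] [InnerProductSpace ℝ V] [FiniteDimensional ℝ V]
  [MeasurableSpace V] [BorelSpace V]
  [NormedAddCommGroup F] [InnerProductSpace ℂ F] [CompleteSpace F]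

theorem Real.fourier_toLp_ae_eq {h : V → F} (h1 : Integrable h) (h2 : MemLp h 2) :
    ((𝓕 (h2.toLp h) : Lp F 2 (volume : Measure V)) : V → F) =ᵐ[volume] 𝓕 h := by
  have hcont : Continuous (𝓕 h) :=
    VectorFourier.fourierIntegral_continuous Real.continuous_fourierChar continuous_inner h1
  have hloc : LocallyIntegrable ((𝓕 (h2.toLp h) : Lp F 2 (volume : Measure V)) : V → F) volume :=
    (Lp.memLp (𝓕 (h2.toLp h))).locallyIntegrable one_le_two
  -- Both sides define the same tempered distribution, so they have the same pairings with
  -- smooth compactly supported test functions.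
  refine Filter.eventuallyEq_iff_sub.2 <| ae_eq_zero_of_integral_contDiff_smul_eq_zero
    (hloc.sub hcont.locallyIntegrable) fun g hg hgc => ?_
  have hGc : HasCompactSupport fun x => (g x : ℂ) := hgc.comp_left Complex.ofReal_zero
  set G : 𝓢(V, ℂ) := hGc.toSchwartzMap (Complex.ofRealCLM.contDiff.comp hg)
  have hweak := congrArg (fun T : 𝓢'(V, F) => T G)
    (Lp.fourier_toTemperedDistribution_eq (h2.toLp h))
  simp only [TemperedDistribution.fourier_apply, Lp.toTemperedDistribution_apply] at hweak
  have hself : ∫ x, 𝓕 G x • h2.toLp h x = ∫ ξ, G ξ • 𝓕 h ξ := by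
    rw [integral_congr_ae (h2.coeFn_toLp.mono fun x hx => by rw [hx]), SchwartzMap.fourier_coe]
    have := VectorFourier.integral_fourierIntegral_smul_eq_flip
      (L := innerₗ V) (μ := volume) (ν := volume) Real.continuous_fourierChar continuous_inner
      G.integrable h1
    rw [flip_innerₗ] at this
    exact this
  have hG : ∀ x, (g x : ℂ) = G x := fun _ => rfl
  simp only [Pi.sub_apply, smul_sub, ← Complex.coe_smul, hG]
  rw [integral_sub (hloc.integrable_smul_left_of_hasCompactSupport G.continuous hGc)
    (hcont.locallyIntegrable.integrable_smul_left_of_hasCompactSupport G.continuous hGc)]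
  exact sub_eq_zero.2 (hweak.symm.trans hself)

theorem Real.lintegral_enorm_fourier_sq {h : V → F} (h1 : Integrable h) (h2 : MemLp h 2) :
    ∫⁻ ξ, ‖𝓕 h ξ‖ₑ ^ 2 = ∫⁻ x, ‖h x‖ₑ ^ 2 := by
  have hnorm := Lp.norm_fourier_eq (h2.toLp h)
  rw [Lp.norm_def, Lp.norm_def, ENNReal.toReal_eq_toReal_iff' (Lp.eLpNorm_ne_top _)
    (Lp.eLpNorm_ne_top _), eLpNorm_congr_ae (Real.fourier_toLp_ae_eq h1 h2),
    eLpNorm_congr_ae h2.coeFn_toLp] at hnorm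
  simp only [lintegral_enorm_sq_eq_eLpNorm_sq, hnorm]

end Plancherel

theorem integral_exp_mul_eq_fourier (h : ℝ → ℂ) (x : ℝ) :
    ∫ ξ, cexp (I * ((x * ξ : ℝ) : ℂ)) * h ξ = 𝓕 h (-(2 * Real.pi)⁻¹ * x) := by
  rw [Real.fourier_real_eq_integral_exp_smul]
  congr 1 with ξ
  rw [smul_eq_mul]
  congr 2
  push_cast
  field_simp

theorem lintegral_enorm_integral_exp_mul_sq {h : ℝ → ℂ} (h1 : Integrable h) (h2 : MemLp h 2) :
    ∫⁻ x, ‖∫ ξ, cexp (I * ((x * ξ : ℝ) : ℂ)) * h ξ‖ₑ ^ 2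
      = ENNReal.ofReal (2 * Real.pi) * ∫⁻ ξ, ‖h ξ‖ₑ ^ 2 := by
  have hc : -(2 * Real.pi)⁻¹ ≠ 0 := by simp [Real.pi_ne_zero]
  have hmap := Real.map_volume_mul_left hc
  simp_rw [integral_exp_mul_eq_fourier]
  rw [← Real.lintegral_enorm_fourier_sq h1 h2]
  calc ∫⁻ x, ‖𝓕 h (-(2 * Real.pi)⁻¹ * x)‖ₑ ^ 2
      = ∫⁻ ξ, ‖𝓕 h ξ‖ₑ ^ 2 ∂(Measure.map (-(2 * Real.pi)⁻¹ * ·) volume) :=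
        (lintegral_map_equiv (fun ξ => ‖𝓕 h ξ‖ₑ ^ 2)
          (Homeomorph.mulLeft₀ _ hc).toMeasurableEquiv).symm
    _ = _ := by
      rw [hmap, lintegral_smul_measure, smul_eq_mul, inv_neg, abs_neg, inv_inv,
        abs_of_pos Real.two_pi_pos]

noncomputable def fourierFst (g : ℝ × ℝ → ℂ) (x τ : ℝ) : ℂ :=
  ∫ ξ, cexp (I * ((x * ξ : ℝ) : ℂ)) * g (ξ, τ)

section fourierFst

variable {g : ℝ × ℝ → ℂ}

theorem measurable_fourierFst (hg : Continuous g) : Measurable (Function.uncurry (fourierFst g)) :=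
  (show Continuous fun q : (ℝ × ℝ) × ℝ => cexp (I * ((q.1.1 * q.2 : ℝ) : ℂ)) * g (q.2, q.1.2) by
    fun_prop).stronglyMeasurable.integral_prod_right'.measurable

theorem enorm_integral_exp_le_lintegral_fourierFst (hg : Integrable g) (x t : ℝ) :
    ‖∫ p : ℝ × ℝ, cexp (I * ((x * p.1 + t * p.2 : ℝ) : ℂ)) * g p‖ₑ
      ≤ ∫⁻ τ, ‖fourierFst g x τ‖ₑ := by
  have hint : Integrable (fun p : ℝ × ℝ => cexp (I * ((x * p.1 + t * p.2 : ℝ) : ℂ)) * g p)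
      (volume.prod volume) := by
    rw [← Measure.volume_eq_prod]
    exact hg.bdd_mul (c := 1) (by fun_prop)
      (ae_of_all _ fun p => (Complex.norm_exp_I_mul_ofReal _).le)
  rw [Measure.volume_eq_prod, integral_prod_symm _ hint]
  refine (enorm_integral_le_lintegral_enorm _).trans_eq (lintegral_congr fun τ => ?_)
  have hsplit : ∀ ξ : ℝ, cexp (I * ((x * ξ + t * τ : ℝ) : ℂ)) * g (ξ, τ)
      = cexp (I * ((t * τ : ℝ) : ℂ)) * (cexp (I * ((x * ξ : ℝ) : ℂ)) * g (ξ, τ)) := fun ξ => by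
    rw [← mul_assoc, ← Complex.exp_add]
    push_cast
    ring_nf
  simp_rw [hsplit, integral_const_mul, enorm_mul, Complex.enorm_exp_I_mul_ofReal, one_mul]
  rfl

theorem lintegral_enorm_fourierFst_sq (hg : Continuous g) (hgc : HasCompactSupport g) (τ : ℝ) :
    ∫⁻ x, ‖fourierFst g x τ‖ₑ ^ 2 = ENNReal.ofReal (2 * Real.pi) * ∫⁻ ξ, ‖g (ξ, τ)‖ₑ ^ 2 := by
  have hcont : Continuous fun ξ => g (ξ, τ) := by fun_prop
  exact lintegral_enorm_integral_exp_mul_sq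
    (hcont.integrable_of_hasCompactSupport (hgc.comp_prodMk_const τ))
    (hcont.memLp_of_hasCompactSupport (hgc.comp_prodMk_const τ))

theorem lintegral_iSup_enorm_integral_exp_sq_le (hg : Continuous g) (hgc : HasCompactSupport g)
    {w : ℝ → ℝ≥0∞} (hw : Measurable w) (hw0 : ∀ τ, w τ ≠ 0) (hwt : ∀ τ, w τ ≠ ∞) :
    ∫⁻ x, (⨆ t, ‖∫ p : ℝ × ℝ, cexp (I * ((x * p.1 + t * p.2 : ℝ) : ℂ)) * g p‖ₑ) ^ 2
      ≤ (∫⁻ τ, (w τ)⁻¹ ^ 2) * ENNReal.ofReal (2 * Real.pi) * ∫⁻ p, (w p.2 * ‖g p‖ₑ) ^ 2 := by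
  have hG := measurable_fourierFst hg
  have hslice : ∀ x, Measurable (fourierFst g x) := fun x => hG.comp measurable_prodMk_left
  have hF : Measurable fun q : ℝ × ℝ => (w q.2 * ‖fourierFst g q.1 q.2‖ₑ) ^ 2 :=
    ((hw.comp measurable_snd).mul hG.enorm).pow_const 2
  have hgm : Measurable fun p : ℝ × ℝ => w p.2 ^ 2 * ‖g p‖ₑ ^ 2 :=
    ((hw.comp measurable_snd).pow_const 2).mul (hg.measurable.enorm.pow_const 2)
  calc ∫⁻ x, (⨆ t, ‖∫ p : ℝ × ℝ, cexp (I * ((x * p.1 + t * p.2 : ℝ) : ℂ)) * g p‖ₑ) ^ 2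
      ≤ ∫⁻ x, (∫⁻ τ, ‖fourierFst g x τ‖ₑ) ^ 2 := by
        gcongr with x
        exact iSup_le (enorm_integral_exp_le_lintegral_fourierFst
          (hg.integrable_of_hasCompactSupport hgc) x)
    _ ≤ ∫⁻ x, (∫⁻ τ, (w τ)⁻¹ ^ 2) * ∫⁻ τ, (w τ * ‖fourierFst g x τ‖ₑ) ^ 2 := by
        gcongr with x
        exact ENNReal.lintegral_sq_le_lintegral_inv_sq_mul hw.aemeasurable
          (hslice x).enorm.aemeasurable hw0 hwt
    _ = (∫⁻ τ, (w τ)⁻¹ ^ 2) * ∫⁻ τ, w τ ^ 2 * ∫⁻ x, ‖fourierFst g x τ‖ₑ ^ 2 := by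
        rw [lintegral_const_mul _ hF.lintegral_prod_right', lintegral_lintegral_swap
          hF.aemeasurable]
        simp_rw [mul_pow]
        congr 1
        exact lintegral_congr fun τ => lintegral_const_mul' _ _ (pow_ne_top (hwt τ))
    _ = (∫⁻ τ, (w τ)⁻¹ ^ 2) * ENNReal.ofReal (2 * Real.pi) * ∫⁻ p, (w p.2 * ‖g p‖ₑ) ^ 2 := by
        simp_rw [lintegral_enorm_fourierFst_sq hg hgc, mul_pow]
        rw [Measure.volume_eq_prod, lintegral_prod_symm _ hgm.aemeasurable, mul_assoc, ← lintegral_const_mul' _ _ ofReal_ne_top]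
        congr 1
        refine lintegral_congr fun τ => ?_
        rw [lintegral_const_mul' _ _ (pow_ne_top (hwt τ))]
        ring

end fourierFst

theorem lintegral_inv_ofReal_one_add_abs_rpow_sq_lt_top {ρ : ℝ} (hρ : 1 / 2 < ρ) :
    ∫⁻ τ : ℝ, (ENNReal.ofReal ((1 + |τ|) ^ ρ))⁻¹ ^ 2 < ∞ := by
  have hint : Integrable fun τ : ℝ => (1 + ‖τ‖) ^ (-(2 * ρ)) :=
    integrable_one_add_norm (by simp; linarith)
  have hpow : ∀ τ : ℝ, (ENNReal.ofReal ((1 + |τ|) ^ ρ))⁻¹ ^ 2 = ‖(1 + ‖τ‖) ^ (-(2 * ρ))‖ₑ := by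
    intro τ
    have hpos : 0 < 1 + |τ| := by positivity
    rw [← ofReal_inv_of_pos (by positivity), ← ofReal_pow (by positivity),
      Real.enorm_of_nonneg (by positivity), Real.norm_eq_abs, ← Real.rpow_neg hpos.le,
      ← Real.rpow_mul_natCast hpos.le]
    norm_num [mul_comm]
  simp_rw [hpow]
  exact hint.hasFiniteIntegral

theorem abs_benjaminPhase_le {l : ℝ} (hl : |l| ≤ 1) (ξ : ℝ) :
    |benjaminPhase l ξ| ≤ (1 + |ξ|) ^ 3 - 1 := by
  have hquad : |l * ξ * (|ξ|)| ≤ |ξ| ^ 2 := by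
    rw [abs_mul, abs_mul, abs_abs, mul_assoc, sq]
    exact mul_le_of_le_one_left (by positivity) hl
  have hcub : |ξ ^ 3| = |ξ| ^ 3 := abs_pow ξ 3
  have htri := abs_sub (l * ξ * |ξ|) (ξ ^ 3)
  unfold benjaminPhase
  nlinarith [abs_nonneg ξ]

theorem one_add_abs_le_mul_one_add_abs_sub_benjaminPhase {l : ℝ} (hl : |l| ≤ 1) (ξ τ : ℝ) :
    1 + |τ| ≤ (1 + |τ - benjaminPhase l ξ|) * (1 + |ξ|) ^ 3 := by
  have hphase := abs_benjaminPhase_le hl ξ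
  have htri := abs_sub_abs_le_abs_sub τ (benjaminPhase l ξ)
  have hcube : 1 ≤ (1 + |ξ|) ^ 3 := one_le_pow₀ (by linarith [abs_nonneg ξ])
  nlinarith [abs_nonneg (τ - benjaminPhase l ξ)]

noncomputable def benjaminSymbol (l ρ s : ℝ) (p : ℝ × ℝ) : ℝ :=
  (1 + |p.1|) ^ s * (1 + |p.2 - benjaminPhase l p.1|) ^ (-ρ)

theorem symbolFourierInt_eq (l ρ s : ℝ) (f : ℝ × ℝ → ℂ) (x t : ℝ) :
    symbolFourierInt l ρ s f x t
      = ∫ p : ℝ × ℝ, cexp (I * ((x * p.1 + t * p.2 : ℝ) : ℂ)) * (benjaminSymbol l ρ s p * f p) := by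
  unfold symbolFourierInt benjaminSymbol
  congr 1 with p
  push_cast
  ring

theorem continuous_benjaminSymbol (l ρ s : ℝ) : Continuous (benjaminSymbol l ρ s) := by
  have hpos : ∀ u : ℝ, 1 + |u| ≠ 0 := fun u => by positivity
  unfold benjaminSymbol benjaminPhase
  exact ((continuous_const.add continuous_fst.abs).rpow_const fun p => .inl (hpos _)).mul
    ((continuous_const.add (by fun_prop)).rpow_const fun p => .inl (hpos _))

theorem benjaminSymbol_nonneg (l ρ s : ℝ) (p : ℝ × ℝ) : 0 ≤ benjaminSymbol l ρ s p := by
  unfold benjaminSymbol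
  positivity

theorem one_add_abs_rpow_mul_benjaminSymbol_le_one {l ρ s : ℝ} (hl : |l| ≤ 1) (hρ : 0 ≤ ρ)
    (hs : 3 * ρ ≤ s) (p : ℝ × ℝ) : (1 + |p.2|) ^ ρ * benjaminSymbol l ρ (-s) p ≤ 1 := by
  set a := 1 + |p.1|
  set b := 1 + |p.2 - benjaminPhase l p.1|
  have ha : 1 ≤ a := le_add_of_nonneg_right (abs_nonneg _)
  have hb : 0 < b := by positivity
  have hdom : (1 + |p.2|) ^ ρ ≤ a ^ s * b ^ ρ := calc
    (1 + |p.2|) ^ ρ ≤ (b * a ^ 3) ^ ρ := by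
      gcongr
      exact one_add_abs_le_mul_one_add_abs_sub_benjaminPhase hl p.1 p.2
    _ = b ^ ρ * a ^ (3 * ρ) := by
      rw [Real.mul_rpow hb.le (by positivity), ← Real.rpow_natCast, ← Real.rpow_mul (by positivity)]
      norm_num
    _ ≤ a ^ s * b ^ ρ := by
      rw [mul_comm]
      gcongr
  rw [benjaminSymbol, Real.rpow_neg (by positivity), Real.rpow_neg hb.le, ← mul_inv,
    ← div_eq_mul_inv, div_le_one (by positivity)]
  exact hdom

theorem ofReal_one_add_abs_rpow_mul_enorm_benjaminSymbol_mul_le {l ρ s : ℝ} (hl : |l| ≤ 1)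
    (hρ : 0 ≤ ρ) (hs : 3 * ρ ≤ s) (p : ℝ × ℝ) (z : ℂ) :
    ENNReal.ofReal ((1 + |p.2|) ^ ρ) * ‖(benjaminSymbol l ρ (-s) p : ℂ) * z‖ₑ ≤ ‖z‖ₑ := calc
  _ = ENNReal.ofReal ((1 + |p.2|) ^ ρ * benjaminSymbol l ρ (-s) p) * ‖z‖ₑ := by
    rw [enorm_mul, ← ofReal_norm (x := (benjaminSymbol l ρ (-s) p : ℂ)), Complex.norm_real,
      Real.norm_of_nonneg (benjaminSymbol_nonneg ..), ← mul_assoc,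
      ENNReal.ofReal_mul (by positivity)]
  _ ≤ 1 * ‖z‖ₑ := by
    gcongr
    exact ofReal_le_one.2 (one_add_abs_rpow_mul_benjaminSymbol_le_one hl hρ hs p)
  _ = ‖z‖ₑ := one_mul _

/-- Lemma 4.2 (ii): ‖A^{−s} F_ρ‖_{L²_x L^∞_t} ≤ c ‖f‖_{L²} for ρ > 1/2 and s > 3ρ. -/
theorem L2x_Linftyt_estimate (l ρ s : ℝ) (hl0 : 0 < l) (hl1 : l < 1)
    (hρ : 1 / 2 < ρ) (hs : 3 * ρ < s) :
    ∃ c : ℝ, 0 < c ∧ ∀ f : ℝ × ℝ → ℂ, Continuous f → HasCompactSupport f →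
      (∫⁻ x : ℝ, (⨆ t : ℝ, (‖symbolFourierInt l ρ (-s) f x t‖₊ : ℝ≥0∞)) ^ 2)
          ^ ((1 : ℝ) / 2)
        ≤ ENNReal.ofReal c *
          (∫⁻ p : ℝ × ℝ, (‖f p‖₊ : ℝ≥0∞) ^ 2) ^ ((1 : ℝ) / 2) := by
  have hl : |l| ≤ 1 := abs_le.2 ⟨by linarith, hl1.le⟩
  set w : ℝ → ℝ≥0∞ := fun τ => ENNReal.ofReal ((1 + |τ|) ^ ρ)
  set K := (∫⁻ τ, (w τ)⁻¹ ^ 2) * ENNReal.ofReal (2 * Real.pi)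
  have hK : K ≠ ∞ :=
    mul_ne_top (lintegral_inv_ofReal_one_add_abs_rpow_sq_lt_top hρ).ne ofReal_ne_top
  refine ⟨(K ^ (1 / 2 : ℝ)).toReal + 1, by positivity, fun f hf hfc => ?_⟩
  have hbound :
      ∫⁻ x, (⨆ t, ‖symbolFourierInt l ρ (-s) f x t‖ₑ) ^ 2 ≤ K * ∫⁻ p, ‖f p‖ₑ ^ 2 := by
    simp_rw [symbolFourierInt_eq]
    refine (lintegral_iSup_enorm_integral_exp_sq_le (w := w)
      ((Complex.continuous_ofReal.comp (continuous_benjaminSymbol ..)).mul hf) hfc.mul_left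
      (by fun_prop) (fun τ => (ofReal_pos.2 (by positivity)).ne') (fun τ => ofReal_ne_top)).trans ?_
    gcongr with p
    exact ofReal_one_add_abs_rpow_mul_enorm_benjaminSymbol_mul_le hl (by linarith) hs.le p (f p)
  simp only [← enorm_eq_nnnorm]
  calc _ ≤ (K * ∫⁻ p, ‖f p‖ₑ ^ 2) ^ (1 / 2 : ℝ) := by gcongr
    _ = K ^ (1 / 2 : ℝ) * (∫⁻ p, ‖f p‖ₑ ^ 2) ^ (1 / 2 : ℝ) := mul_rpow_of_nonneg _ _ (by norm_num)
    _ ≤ _ := by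
      gcongr
      rw [ofReal_add toReal_nonneg zero_le_one,
        ofReal_toReal (rpow_ne_top_of_nonneg (by norm_num) hK)]
      exact le_self_add
end
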